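/- No PD-code containing a Reidemeister 1 loop — i.e., containing a quadruple in which some label α occurs with both signs +α and −α — is fixed by the action of the mirror element (−1, 1, …, 1, id) of the Whitten group Γ_μ (whose action cyclically shifts each quadruple of positive sign-pattern one position to the right and each quadruple of negative sign-pattern one position to the left). -/

import Mathlib

/-!
STATEMENT 7.  No PD-code containing a Reidemeister 1 loop — i.e. containing a
quadruple in which some label `α` occurs with both signs `+α` and `−α` — is fixed
by the action of the mirror element `(−1, 1, …, 1, id)` of the Whitten group `Γ_μ`
(whose action cyclically shifts each quadruple of positive sign-pattern one
position to the right and each quadruple of negative sign-pattern one position to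
the left).
-/

/-- A label `(i, j)`: arc `j` of component `i` (arcs are numbered `1, …, nᵢ`). -/
abbrev Label (μ : ℕ) := Fin μ × ℕ

/-- A signed label; the `Bool` is the sign (`true` = positive). -/
abbrev SL (μ : ℕ) := Bool × Label μ

/-- A quadruple of signed labels. -/
abbrev Quad (μ : ℕ) := Fin 4 → SL μ

/-- Negation of a signed label. -/
def negS {μ : ℕ} (x : SL μ) : SL μ := (!x.1, x.2)

/-- `Paired nn a b`: `a` and `b` are non-adjacent entries of a quadruple with `a`
positive with label `(i, j)` and `b` negative with label `(i, j+1)` (second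
coordinates consecutive modulo `nn i`, on the labels `1, …, nn i`); this encodes
conditions (3) and (4): equal first coordinates, consecutive second coordinates,
opposite signs, the lesser (i.e. earlier in the cyclic order) label positive. -/
def Paired {μ : ℕ} (nn : Fin μ → ℕ) (a b : SL μ) : Prop :=
  a.1 = true ∧ b.1 = false ∧ b.2.1 = a.2.1 ∧ b.2.2 = a.2.2 % nn a.2.1 + 1

/-- `C = (nn, Q)` is a PD-code on the label set `{(i,j) : i : Fin μ, 1 ≤ j ≤ nn i}`:
conditions (1)–(4) of the definition of a PD-code. -/
structure IsPDCode {μ : ℕ} (nn : Fin μ → ℕ) (Q : Finset (Quad μ)) : Prop where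
  /-- every component has at least one arc -/
  npos : ∀ i, 1 ≤ nn i
  /-- all entries are labels of the label set -/
  mem : ∀ q ∈ Q, ∀ k : Fin 4, 1 ≤ (q k).2.2 ∧ (q k).2.2 ≤ nn (q k).2.1
  /-- (1): each label appears exactly twice, once positively and once negatively;
  equivalently each signed label occurs exactly once as an entry -/
  once : ∀ x : SL μ, 1 ≤ x.2.2 → x.2.2 ≤ nn x.2.1 →
      ∃! qk : {q // q ∈ Q} × Fin 4, (qk.1 : Quad μ) qk.2 = x
  /-- (2): each quadruple contains two positive (and hence two negative) entries -/
  twoPos : ∀ q ∈ Q, (Finset.univ.filter fun k : Fin 4 => (q k).1 = true).card = 2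
  /-- (2): each quadruple begins with a positive entry -/
  startPos : ∀ q ∈ Q, (q 0).1 = true
  /-- (3),(4) for the first and third entries -/
  under : ∀ q ∈ Q, Paired nn (q 0) (q 2)
  /-- (3),(4) for the second and fourth entries -/
  over' : ∀ q ∈ Q, Paired nn (q 1) (q 3) ∨ Paired nn (q 3) (q 1)

/-- The set of signed labels `{+λ, −λ : λ ∈ Λ}` of the code. -/
abbrev SLabels {μ : ℕ} (nn : Fin μ → ℕ) := {x : SL μ // 1 ≤ x.2.2 ∧ x.2.2 ≤ nn x.2.1}

/-- `s` is the successor map of the PD-code `(nn, Q)`: it sends each entry of a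
quadruple to the negation of the (cyclically) next entry of that quadruple. -/
def IsSuccessor {μ : ℕ} (nn : Fin μ → ℕ) (Q : Finset (Quad μ))
    (s : Equiv.Perm (SLabels nn)) : Prop :=
  ∀ q ∈ Q, ∀ (k : Fin 4) (hk : 1 ≤ (q k).2.2 ∧ (q k).2.2 ≤ nn (q k).2.1),
    (s ⟨q k, hk⟩ : SLabels nn).val = negS (q (k + 1))

/-- An element `γ = (ε₀, ε₁, …, ε_μ, p)` of the Whitten group `Γ_μ = Z₂^{μ+1} ⋊ S_μ`.
Signs are encoded as `Bool` (`true` = `+1`, `false` = `−1`); `e0` is `ε₀`, `e i` is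
`ε_{i+1}` for `i : Fin μ`, and `p ∈ S_μ` permutes the components. -/
structure Whitten (μ : ℕ) where
  e0 : Bool
  e : Fin μ → Bool
  p : Equiv.Perm (Fin μ)

/-- The identity element `(1, 1, …, 1, id)` of `Γ_μ`. -/
def wOne (μ : ℕ) : Whitten μ := ⟨true, fun _ => true, 1⟩

/-- The Whitten group operation
`(ε, p) * (ε', q) = (ε₀ε'₀, ε₁ε'_{p(1)}, …, ε_με'_{p(μ)}, q ∘ p)`.
(For sign bits, multiplication is Boolean equality; `γ'.p * γ.p = γ'.p ∘ γ.p`.) -/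
def wMul {μ : ℕ} (γ γ' : Whitten μ) : Whitten μ :=
  ⟨γ.e0 == γ'.e0, fun i => γ.e i == γ'.e (γ.p i), γ'.p * γ.p⟩

/-- (i) of the action: the permutation `p` relabels component `c` as `p c`; the new
component `i` therefore has `nn (p⁻¹ i)` arcs. -/
def actN {μ : ℕ} (γ : Whitten μ) (nn : Fin μ → ℕ) : Fin μ → ℕ := fun i => nn (γ.p⁻¹ i)

/-- The pointwise relabelling of a signed label `x` by `γ`: (i) the first
coordinate is replaced by `p` of it; (iii) if the resulting component `i` has
`ε_i = −1`, the second coordinate `j ∈ {1,…,nᵢ}` is replaced by the permutation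
fixing `1` and exchanging `j` with `nᵢ + 2 − j` (written below as
`j ↦ (nᵢ + 1 − j) % nᵢ + 1`), and the sign is reversed. -/
def relabel {μ : ℕ} (γ : Whitten μ) (nn : Fin μ → ℕ) (x : SL μ) : SL μ :=
  if γ.e (γ.p x.2.1) = true then (x.1, (γ.p x.2.1, x.2.2))
  else (!x.1, (γ.p x.2.1, (nn x.2.1 + 1 - x.2.2) % nn x.2.1 + 1))

/-- The action of `γ` on a quadruple `q`, the steps being applied in order:
(i) apply `p` to first coordinates (pointwise, via `relabel`);
(ii) if `ε₀ = −1`, cyclically shift each quadruple of positive sign-pattern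
`(+,−,−,+)` one position to the right (`d2 = −1`) and each quadruple of negative
sign-pattern `(+,+,−,−)` one position to the left (`d2 = 1`);
(iii) if the component `i` of the incoming under-edge (the entry at position `0`
after step (ii), i.e. `q d2`) has `ε_i = −1`, cyclically shift the quadruple by two
(`d3 = 2`), and relabel second coordinates and reverse signs in each component `i`
with `ε_i = −1` (pointwise, via `relabel`). -/
def actQuad {μ : ℕ} (γ : Whitten μ) (nn : Fin μ → ℕ) (q : Quad μ) : Quad μ :=
  let d2 : Fin 4 := if γ.e0 = true then 0 else if (q 3).1 = true then -1 else 1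
  let d3 : Fin 4 := if γ.e (γ.p ((q d2).2.1)) = true then 0 else 2
  fun k => relabel γ nn (q (k + d2 + d3))

/-- `γ` fixes the PD-code `(nn, Q)`. -/
def Fixes {μ : ℕ} (γ : Whitten μ) (nn : Fin μ → ℕ) (Q : Finset (Quad μ)) : Prop :=
  actN γ nn = nn ∧ Q.image (actQuad γ nn) = Q

/-- The mirror element `(−1, 1, …, 1, id)` of `Γ_μ`. -/
def mirrorW (μ : ℕ) : Whitten μ := ⟨false, fun _ => true, 1⟩

/-- A PD-code containing a quadruple in which some label occurs with both signs
(a Reidemeister 1 loop) is not fixed by the mirror element. -/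
theorem loop_not_fixed_by_mirror {μ : ℕ} (nn : Fin μ → ℕ) (Q : Finset (Quad μ))
    (h : IsPDCode nn Q)
    (hloop : ∃ q ∈ Q, ∃ l : Label μ,
      (∃ k : Fin 4, q k = (true, l)) ∧ (∃ k : Fin 4, q k = (false, l))) :
    ¬ Fixes (mirrorW μ) nn Q := by
  rintro ⟨-, hQ⟩
  obtain ⟨q, hq, -⟩ := hloop
  set d2 : Fin 4 := if (q 3).1 = true then -1 else 1 with hd2
  have hq' : actQuad (mirrorW μ) nn q ∈ Q := hQ ▸ Finset.mem_image_of_mem _ hq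
  have hact : actQuad (mirrorW μ) nn q = fun k => q (k + d2) := by
    funext k
    simp [actQuad, mirrorW, relabel, hd2]
  have hmem0 := h.mem q hq 0
  obtain ⟨w, _, huniq⟩ := h.once (q 0) hmem0.1 hmem0.2
  have h1 : (⟨⟨q, hq⟩, 0⟩ : {q // q ∈ Q} × Fin 4) = w := huniq _ rfl
  have h2 : (⟨⟨actQuad (mirrorW μ) nn q, hq'⟩, -d2⟩ : {q // q ∈ Q} × Fin 4) = w := by
    apply huniq
    simp [hact]
  have h0 : (0 : Fin 4) = -d2 := congrArg Prod.snd (h1.trans h2.symm)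
  have hd : d2 = -1 ∨ d2 = 1 := by
    rw [hd2]; split <;> simp
  rcases hd with hd | hd <;> rw [hd] at h0 <;> exact absurd h0 (by decide)
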